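/- arXiv:2303.10355 — 2 statements merged into one kernel-verified Lean document; each statement's English description precedes it below -/
import Mathlib

section
/- Let a, b ≥ 0 with a + b > 0, let 1 ≤ q < p, r < ∞, let û > 0 be the unique positive solution of −q + p·a·u^{p−q} + r·b·u^{r−q} = 0, and set α = q^{−1}·p·a·û^{p−q} (equivalently α = 1 − q^{−1}·r·b·û^{r−q}, and α ∈ [0,1]). Define F(u, v, α) = −((1−α)u + αv)^q + a·v^p + b·u^r for u, v ≥ 0. Then F(û, û, α) ≤ F(u, v, α) for all u, v ≥ 0; in particular, −û^q + a·û^p + b·û^r ≤ −u^q + a·u^p + b·u^r for all u ≥ 0. -/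
/-!
Each of the one-variable functions `v ↦ a v^p - α v^q` and `u ↦ b u^r - (1 - α) u^q` has a
critical point at `û` (for the second this is the defining equation of `û`), and by weighted
AM-GM such a critical point is a global minimum on `[0, ∞)`. Convexity of `x ↦ x^q` gives
`((1 - α) u + α v)^q ≤ (1 - α) u^q + α v^q`, so `F (u, v, α)` is bounded below by the sum of
the two one-variable functions, whose minimum value is `F (û, û, α)`.
-/

open Real

lemma mul_rpow_le_weighted_add {q s u₀ t : ℝ} (hq : 0 < q) (hqs : q < s)
    (hu₀ : 0 ≤ u₀) (ht : 0 ≤ t) :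
    s * (t ^ q * u₀ ^ (s - q)) ≤ q * t ^ s + (s - q) * u₀ ^ s := by
  have hs : 0 < s := hq.trans hqs
  have hamgm := geom_mean_le_arith_mean2_weighted (div_nonneg hq.le hs.le)
    (div_nonneg (sub_nonneg.2 hqs.le) hs.le) (rpow_nonneg ht s) (rpow_nonneg hu₀ s)
    (by field_simp; ring)
  rw [← rpow_mul ht, ← rpow_mul hu₀, mul_div_cancel₀ _ hs.ne',
    mul_div_cancel₀ _ hs.ne'] at hamgm
  calc s * (t ^ q * u₀ ^ (s - q))
      ≤ s * (q / s * t ^ s + (s - q) / s * u₀ ^ s) := by gcongr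
    _ = q * t ^ s + (s - q) * u₀ ^ s := by field_simp

lemma mul_rpow_sub_mul_rpow_le_of_critical {c s q u₀ t μ : ℝ} (hc : 0 ≤ c) (hq : 0 < q)
    (hqs : q < s) (hu₀ : 0 < u₀) (ht : 0 ≤ t) (hcrit : q * μ = s * c * u₀ ^ (s - q)) :
    c * u₀ ^ s - μ * u₀ ^ q ≤ c * t ^ s - μ * t ^ q := by
  have hamgm := mul_le_mul_of_nonneg_left (mul_rpow_le_weighted_add hq hqs hu₀.le ht) hc
  have hpow : u₀ ^ (s - q) * u₀ ^ q = u₀ ^ s := by rw [← rpow_add hu₀, sub_add_cancel]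
  suffices q * (c * u₀ ^ s - μ * u₀ ^ q) ≤ q * (c * t ^ s - μ * t ^ q) from
    le_of_mul_le_mul_left this hq
  calc q * (c * u₀ ^ s - μ * u₀ ^ q) = q * c * u₀ ^ s - s * c * (u₀ ^ (s - q) * u₀ ^ q) := by
        linear_combination (-u₀ ^ q) * hcrit
    _ = -((s - q) * c * u₀ ^ s) := by rw [hpow]; ring
    _ ≤ q * c * t ^ s - c * (s * (t ^ q * u₀ ^ (s - q))) := by linarith
    _ = q * (c * t ^ s - μ * t ^ q) := by linear_combination t ^ q * hcrit

theorem lemma_L3_min_general (a b p q r u0 α : ℝ)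
    (ha : 0 ≤ a) (hb : 0 ≤ b)
    (hq : 1 ≤ q) (hqp : q < p) (hqr : q < r)
    (hu0 : 0 < u0)
    (hroot : -q + p * a * u0 ^ (p - q) + r * b * u0 ^ (r - q) = 0)
    (hα : α = q⁻¹ * p * a * u0 ^ (p - q)) :
    (∀ u v : ℝ, 0 ≤ u → 0 ≤ v →
      -((1 - α) * u0 + α * u0) ^ q + a * u0 ^ p + b * u0 ^ r ≤
        -((1 - α) * u + α * v) ^ q + a * v ^ p + b * u ^ r) ∧
    (∀ u : ℝ, 0 ≤ u →
      -u0 ^ q + a * u0 ^ p + b * u0 ^ r ≤ -u ^ q + a * u ^ p + b * u ^ r) := by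
  have hq0 : 0 < q := one_pos.trans_le hq
  have hcritα : q * α = p * a * u0 ^ (p - q) := by rw [hα]; field_simp
  have hcrit1α : q * (1 - α) = r * b * u0 ^ (r - q) := by linear_combination -hroot - hcritα
  have hp0 : 0 < p := hq0.trans hqp
  have hr0 : 0 < r := hq0.trans hqr
  have hα0 : 0 ≤ α := by rw [hα]; positivity
  have h1α0 : 0 ≤ 1 - α := by
    refine nonneg_of_mul_nonneg_right ?_ hq0
    rw [hcrit1α]; positivity
  have hF_lower : ∀ u v : ℝ, 0 ≤ u → 0 ≤ v →
      -u0 ^ q + a * u0 ^ p + b * u0 ^ r ≤ -((1 - α) * u + α * v) ^ q + a * v ^ p + b * u ^ r := by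
    intro u v hu hv
    have hconv := (convexOn_rpow hq).2 hu hv h1α0 hα0 (sub_add_cancel 1 α)
    have hv_min := mul_rpow_sub_mul_rpow_le_of_critical ha hq0 hqp hu0 hv hcritα
    have hu_min := mul_rpow_sub_mul_rpow_le_of_critical hb hq0 hqr hu0 hu hcrit1α
    simp only [smul_eq_mul] at hconv
    linarith
  refine ⟨fun u v hu hv => ?_, fun u hu => ?_⟩
  · simpa only [sub_mul, one_mul, sub_add_cancel] using hF_lower u v hu hv
  · simpa only [sub_mul, one_mul, sub_add_cancel] using hF_lower u u hu hu

/-- **Lemma 3, minimization part.**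
Let `a, b ≥ 0`, `a + b > 0`, `1 ≤ q < p, r < ∞`, let `u0 > 0` be the positive solution of
`-q + p·a·u^(p-q) + r·b·u^(r-q) = 0` and `α = q⁻¹·p·a·u0^(p-q)`.  With
`F (u, v, α) = -((1-α)u + αv)^q + a·v^p + b·u^r`, one has `F (u0, u0, α) ≤ F (u, v, α)`
for all `u, v ≥ 0`; in particular `-u0^q + a·u0^p + b·u0^r ≤ -u^q + a·u^p + b·u^r`
for all `u ≥ 0`. -/
theorem lemma_L3_min (a b p q r u0 α : ℝ)
    (ha : 0 ≤ a) (hb : 0 ≤ b) (hab : 0 < a + b)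
    (hq : 1 ≤ q) (hqp : q < p) (hqr : q < r)
    (hu0 : 0 < u0)
    (hroot : -q + p * a * u0 ^ (p - q) + r * b * u0 ^ (r - q) = 0)
    (hα : α = q⁻¹ * p * a * u0 ^ (p - q)) :
    (∀ u v : ℝ, 0 ≤ u → 0 ≤ v →
      -((1 - α) * u0 + α * u0) ^ q + a * u0 ^ p + b * u0 ^ r ≤
        -((1 - α) * u + α * v) ^ q + a * v ^ p + b * u ^ r) ∧
    (∀ u : ℝ, 0 ≤ u →
      -u0 ^ q + a * u0 ^ p + b * u0 ^ r ≤ -u ^ q + a * u ^ p + b * u ^ r) :=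
  lemma_L3_min_general a b p q r u0 α ha hb hq hqp hqr hu0 hroot hα
end

section
/- Let ν ≥ 1, ν > η > 0, and 0 < θ ≤ 2ν, and define ψ_θ(ξ) = ( |ξ₁|^θ + … + |ξ_d|^θ )^{2/θ} on ℝ^d. Then for every measurable y ∈ L₂(ℝ^d) with ξ ↦ |ξ_j|^ν·y(ξ) in L₂(ℝ^d) for j = 1,…,d, the inequality ‖ψ_θ^{η/2}·y‖_{L₂(ℝ^d)} ≤ d^{η/θ}·‖y‖_{L₂(ℝ^d)}^{1−η/ν}·( max_{1≤j≤d} ‖ |ξ_j|^ν·y ‖_{L₂(ℝ^d)} )^{η/ν} holds, and the constant d^{η/θ} is sharp (no smaller constant works). -/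
/-!
By the power-mean inequality, `ψ_θ(ξ)^{η/2} ≤ d^{η/θ} w(ξ)^{η/ν}`, where `w(ξ)` is the root mean
square of `|ξ₁|^ν, …, |ξ_d|^ν`; this is where `θ ≤ 2ν` enters. Hölder's inequality interpolates
`‖w^{η/ν} y‖₂ ≤ ‖y‖₂^{1-η/ν} ‖w y‖₂^{η/ν}`, and `‖w y‖₂²` is the average of the `‖|ξⱼ|^ν y‖₂²`,
hence at most their maximum. The power-mean inequality is an equality on the diagonal
`|ξ₁| = ⋯ = |ξ_d|`, so indicators of small balls around `(1, …, 1)` show that `d^{η/θ}` is sharp.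
-/

open MeasureTheory ENNReal Filter Topology

namespace MeasureTheory

variable {α : Type*} [MeasurableSpace α] {μ : Measure α}

theorem eLpNorm_rpow_mul_le {p : ℝ≥0∞} (hp0 : p ≠ 0) (hp : p ≠ ∞) {t : ℝ} (ht0 : 0 ≤ t)
    (ht1 : t ≤ 1) {w f : α → ℝ} (hw : ∀ x, 0 ≤ w x) (hf : AEStronglyMeasurable f μ)
    (hwf : AEStronglyMeasurable (fun x => w x * f x) μ) :
    eLpNorm (fun x => w x ^ t * f x) p μ ≤
      eLpNorm f p μ ^ (1 - t) * eLpNorm (fun x => w x * f x) p μ ^ t := by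
  set r := p.toReal
  have hr : 0 < r := ENNReal.toReal_pos hp0 hp
  have split : ∀ x, ‖w x ^ t * f x‖ₑ ^ r =
      (‖f x‖ₑ ^ r) ^ (1 - t) * (‖w x * f x‖ₑ ^ r) ^ t := by
    intro x
    rw [enorm_mul, enorm_mul, Real.enorm_rpow_of_nonneg (hw x) ht0,
      mul_rpow_of_nonneg _ _ hr.le, mul_rpow_of_nonneg _ _ hr.le, mul_rpow_of_nonneg _ _ ht0,
      ← rpow_mul, ← rpow_mul, ← rpow_mul, ← rpow_mul, mul_left_comm,
      ← rpow_add_of_nonneg _ _ (by nlinarith) (by positivity), mul_comm t r]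
    ring_nf
  rw [eLpNorm_eq_lintegral_rpow_enorm_toReal hp0 hp, eLpNorm_eq_lintegral_rpow_enorm_toReal hp0 hp,
    eLpNorm_eq_lintegral_rpow_enorm_toReal hp0 hp, lintegral_congr split]
  calc (∫⁻ x, (‖f x‖ₑ ^ r) ^ (1 - t) * (‖w x * f x‖ₑ ^ r) ^ t ∂μ) ^ (1 / r)
      ≤ ((∫⁻ x, ‖f x‖ₑ ^ r ∂μ) ^ (1 - t) * (∫⁻ x, ‖w x * f x‖ₑ ^ r ∂μ) ^ t) ^ (1 / r) := by
        gcongr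
        exact lintegral_mul_norm_pow_le (hf.enorm.pow_const r) (hwf.enorm.pow_const r)
          (by linarith) ht0 (by ring)
    _ = _ := by
        rw [mul_rpow_of_nonneg _ _ (by positivity), ← rpow_mul, ← rpow_mul, ← rpow_mul,
          ← rpow_mul, mul_comm (1 - t), mul_comm t]

theorem eLpNorm_sqrt_mean_sq_le_iSup {ι : Type*} [Fintype ι] {g : ι → α → ℝ}
    (hg : ∀ j, AEStronglyMeasurable (g j) μ) :
    eLpNorm (fun x => √((∑ j, g j x ^ 2) / Fintype.card ι)) 2 μ ≤ ⨆ j, eLpNorm (g j) 2 μ := by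
  rcases isEmpty_or_nonempty ι with hι | hι
  · simp
  set M := ⨆ j, eLpNorm (g j) 2 μ
  have hn : (0 : ℝ) < Fintype.card ι := by exact_mod_cast Fintype.card_pos
  have pointwise : ∀ x, ‖√((∑ j, g j x ^ 2) / Fintype.card ι)‖ₑ ^ (2 : ℝ) =
      (Fintype.card ι : ℝ≥0∞)⁻¹ * ∑ j, ‖g j x‖ₑ ^ (2 : ℝ) := by
    intro x
    rw [Real.enorm_eq_ofReal (Real.sqrt_nonneg _),
      ofReal_rpow_of_nonneg (Real.sqrt_nonneg _) (by norm_num), Real.rpow_two,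
      Real.sq_sqrt (by positivity), div_eq_inv_mul, ofReal_mul (by positivity), ofReal_inv_of_pos hn,
      ofReal_natCast, ofReal_sum_of_nonneg (fun j _ => sq_nonneg _)]
    congr 1
    refine Finset.sum_congr rfl fun j _ => ?_
    rw [← Real.enorm_eq_ofReal (sq_nonneg _), rpow_two, enorm_pow]
  have sq_le : ∫⁻ x, ‖√((∑ j, g j x ^ 2) / Fintype.card ι)‖ₑ ^ (2 : ℝ) ∂μ ≤ M ^ (2 : ℝ) := by
    rw [lintegral_congr pointwise, lintegral_const_mul' _ _ (by simp),
      lintegral_finsetSum' _ fun j _ => (hg j).enorm.pow_const _]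
    calc (Fintype.card ι : ℝ≥0∞)⁻¹ * ∑ j, ∫⁻ x, ‖g j x‖ₑ ^ (2 : ℝ) ∂μ
        ≤ (Fintype.card ι : ℝ≥0∞)⁻¹ * ∑ _j : ι, M ^ (2 : ℝ) := by
          gcongr with j
          have h := eLpNorm_nnreal_pow_eq_lintegral (μ := μ) (f := g j) (p := 2) two_ne_zero
          rw [NNReal.coe_ofNat, ENNReal.coe_ofNat] at h
          rw [← h]
          exact rpow_le_rpow (le_iSup (fun j => eLpNorm (g j) 2 μ) j) (by norm_num)
      _ = M ^ (2 : ℝ) := by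
          rw [Finset.sum_const, Finset.card_univ, nsmul_eq_mul, ← mul_assoc,
            ENNReal.inv_mul_cancel (by simp) (by simp), one_mul]
  rw [eLpNorm_eq_lintegral_rpow_enorm_toReal two_ne_zero ofNat_ne_top, toReal_ofNat]
  calc _ ≤ (M ^ (2 : ℝ)) ^ (1 / (2 : ℝ)) := by gcongr
    _ = M := by rw [← rpow_mul]; norm_num

variable {p : ℝ≥0∞} {s : Set α} {f : α → ℝ}

theorem enorm_mul_eLpNorm_indicator_one_le {a : ℝ} (h : ∀ x ∈ s, |a| ≤ |f x|) :
    ‖a‖ₑ * eLpNorm (s.indicator fun _ => (1 : ℝ)) p μ ≤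
      eLpNorm (fun x => f x * s.indicator (fun _ => (1 : ℝ)) x) p μ := by
  rw [← eLpNorm_const_smul]
  refine eLpNorm_mono fun x => ?_
  by_cases hx : x ∈ s <;> simp [hx, h x]

theorem eLpNorm_mul_indicator_one_le {b : ℝ} (h : ∀ x ∈ s, |f x| ≤ |b|) :
    eLpNorm (fun x => f x * s.indicator (fun _ => (1 : ℝ)) x) p μ ≤
      ‖b‖ₑ * eLpNorm (s.indicator fun _ => (1 : ℝ)) p μ := by
  rw [← eLpNorm_const_smul]
  refine eLpNorm_mono fun x => ?_
  by_cases hx : x ∈ s <;> simp [hx, h x]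

end MeasureTheory

theorem Real.mean_rpow_rpow_le_mean_rpow {ι : Type*} [Fintype ι] [Nonempty ι] {x : ι → ℝ}
    (hx : ∀ i, 0 ≤ x i) {p q : ℝ} (hp : 0 < p) (hpq : p ≤ q) :
    ((∑ i, x i ^ p) / Fintype.card ι) ^ (q / p) ≤ (∑ i, x i ^ q) / Fintype.card ι := by
  have hn : (0 : ℝ) < Fintype.card ι := by exact_mod_cast Fintype.card_pos
  have jensen := Real.rpow_arith_mean_le_arith_mean_rpow Finset.univ
    (fun _ => (Fintype.card ι : ℝ)⁻¹) (fun i => x i ^ p) (fun _ _ => by positivity)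
    (by simp [Finset.card_univ, hn.ne']) (fun i _ => by have := hx i; positivity)
    ((one_le_div hp).2 hpq)
  simp only [← Finset.mul_sum, ← Real.rpow_mul (hx _), mul_div_cancel₀ q hp.ne'] at jensen
  simpa only [div_eq_inv_mul] using jensen

theorem exists_mul_one_add_rpow_lt_mul_one_sub_rpow {C D : ℝ} (hCD : C < D) (η : ℝ) :
    ∃ ε, 0 < ε ∧ ε < 1 ∧ C * (1 + ε) ^ η < D * (1 - ε) ^ η := by
  have near_zero : ∀ᶠ ε in 𝓝 (0 : ℝ), C * (1 + ε) ^ η < D * (1 - ε) ^ η :=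
    ContinuousAt.eventually_lt (by fun_prop (disch := norm_num)) (by fun_prop (disch := norm_num))
      (by simpa using hCD)
  obtain ⟨ε, hε, hε0, hε1⟩ :=
    ((near_zero.filter_mono nhdsWithin_le_nhds).and (Ioo_mem_nhdsGT one_pos)).exists
  exact ⟨ε, hε0, hε1, hε⟩

theorem ENNReal.not_le_ofReal_mul_rpow_mul_iSup_rpow {ι : Type*} {L N : ℝ≥0∞} {M : ι → ℝ≥0∞}
    {a b C t : ℝ} (hN0 : N ≠ 0) (hN : N ≠ ∞) (ht : 0 ≤ t) (hb : 0 ≤ b) (ha : 0 < a)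
    (hL : ENNReal.ofReal a * N ≤ L) (hM : ∀ j, M j ≤ ENNReal.ofReal b * N)
    (hCa : C * b ^ t < a) :
    ¬ L ≤ ENNReal.ofReal C * N ^ (1 - t) * (⨆ j, M j) ^ t := by
  intro h
  have key : ENNReal.ofReal a * N ≤ ENNReal.ofReal (C * b ^ t) * N := calc
    _ ≤ _ := hL
    _ ≤ _ := h
    _ ≤ ENNReal.ofReal C * N ^ (1 - t) * (ENNReal.ofReal b * N) ^ t := by
      gcongr
      exact iSup_le hM
    _ = ENNReal.ofReal C * ENNReal.ofReal (b ^ t) * (N ^ (1 - t) * N ^ t) := by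
      rw [mul_rpow_of_nonneg _ _ ht, ofReal_rpow_of_nonneg hb ht]
      ring
    _ = ENNReal.ofReal (C * b ^ t) * N := by
      rw [← rpow_add _ _ hN0 hN, ofReal_mul' (by positivity)]
      norm_num
  rcases ofReal_le_ofReal_iff'.1 ((ENNReal.mul_le_mul_iff_left hN0 hN).1 key) with h' | h' <;>
    linarith

theorem EuclideanSpace.abs_apply_mem_Icc_of_mem_closedBall_one {ι : Type*} [Fintype ι] {ε : ℝ}
    {ξ : EuclideanSpace ℝ ι} (hξ : ξ ∈ Metric.closedBall (WithLp.toLp 2 fun _ : ι => 1) ε)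
    (j : ι) : |ξ j| ∈ Set.Icc (1 - ε) (1 + ε) := by
  have h := (PiLp.norm_apply_le (ξ - WithLp.toLp 2 fun _ : ι => (1 : ℝ)) j).trans
    (mem_closedBall_iff_norm.1 hξ)
  simp only [PiLp.sub_apply, Real.norm_eq_abs] at h
  constructor <;>
    linarith [abs_sub_abs_le_abs_sub (ξ j) 1, abs_sub_abs_le_abs_sub 1 (ξ j), abs_sub_comm (ξ j) 1,
      abs_one (α := ℝ)]

/-- `ψ_θ`, the Fourier symbol of the generalized Laplace operator `Λ_θ`. -/
noncomputable def laplaceSymbol {ι : Type*} [Fintype ι] (θ : ℝ) (ξ : ι → ℝ) : ℝ :=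
  (∑ i, |ξ i| ^ θ) ^ (2 / θ)

theorem laplaceSymbol_nonneg {ι : Type*} [Fintype ι] (θ : ℝ) (ξ : ι → ℝ) :
    0 ≤ laplaceSymbol θ ξ := by
  unfold laplaceSymbol
  positivity

theorem laplaceSymbol_rpow_le {ι : Type*} [Fintype ι] [Nonempty ι] (x : ι → ℝ)
    {ν η θ : ℝ} (hη : 0 ≤ η) (hθ : 0 < θ) (hθν : θ ≤ 2 * ν) :
    laplaceSymbol θ x ^ (η / 2) ≤
      (Fintype.card ι : ℝ) ^ (η / θ) * √((∑ i, |x i| ^ (2 * ν)) / Fintype.card ι) ^ (η / ν) := by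
  have hn : (0 : ℝ) < Fintype.card ι := by exact_mod_cast Fintype.card_pos
  have hν : 0 < ν := by linarith
  set A := (∑ i, |x i| ^ θ) / Fintype.card ι
  set B := (∑ i, |x i| ^ (2 * ν)) / Fintype.card ι
  have hA : 0 ≤ A := by positivity
  have hB : 0 ≤ B := by positivity
  have power_mean : A ^ (η / θ) ≤ √B ^ (η / ν) := calc
    A ^ (η / θ) = (A ^ (2 * ν / θ)) ^ (η / (2 * ν)) := by
      rw [← Real.rpow_mul hA]; congr 1; field_simp
    _ ≤ B ^ (η / (2 * ν)) := by
      gcongr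
      exact Real.mean_rpow_rpow_le_mean_rpow (fun i => abs_nonneg (x i)) hθ hθν
    _ = √B ^ (η / ν) := by
      rw [Real.sqrt_eq_rpow, ← Real.rpow_mul hB]; congr 1; field_simp
  calc laplaceSymbol θ x ^ (η / 2) = (Fintype.card ι * A) ^ (η / θ) := by
        rw [laplaceSymbol, mul_div_cancel₀ _ hn.ne', ← Real.rpow_mul (by positivity)]
        congr 1
        field_simp
    _ = (Fintype.card ι : ℝ) ^ (η / θ) * A ^ (η / θ) := Real.mul_rpow hn.le hA
    _ ≤ _ := by gcongr

theorem card_rpow_mul_rpow_le_laplaceSymbol_rpow {ι : Type*} [Fintype ι] {x : ι → ℝ} {a : ℝ}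
    (ha : 0 ≤ a) (hx : ∀ i, a ≤ |x i|) {η θ : ℝ} (hη : 0 ≤ η) (hθ : 0 < θ) :
    (Fintype.card ι : ℝ) ^ (η / θ) * a ^ η ≤ laplaceSymbol θ x ^ (η / 2) := calc
  (Fintype.card ι : ℝ) ^ (η / θ) * a ^ η = ((∑ _i : ι, a ^ θ) ^ (2 / θ)) ^ (η / 2) := by
    rw [Finset.sum_const, Finset.card_univ, nsmul_eq_mul, ← Real.rpow_mul (by positivity),
      Real.mul_rpow (by positivity) (by positivity), ← Real.rpow_mul ha]
    congr 2 <;> field_simp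
  _ ≤ laplaceSymbol θ x ^ (η / 2) := by
    unfold laplaceSymbol
    gcongr with i
    exact hx i

theorem eLpNorm_laplaceSymbol_rpow_mul_le {ι : Type*} [Fintype ι] [Nonempty ι]
    {μ : Measure (EuclideanSpace ℝ ι)} {ν η θ : ℝ} (hη : 0 ≤ η) (hην : η ≤ ν) (hθ : 0 < θ)
    (hθν : θ ≤ 2 * ν) {y : EuclideanSpace ℝ ι → ℝ} (hy : AEStronglyMeasurable y μ)
    (hyν : ∀ j, AEStronglyMeasurable (fun ξ => |ξ j| ^ ν * y ξ) μ) :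
    eLpNorm (fun ξ => laplaceSymbol θ ξ.ofLp ^ (η / 2) * y ξ) 2 μ ≤
      ENNReal.ofReal ((Fintype.card ι : ℝ) ^ (η / θ)) * eLpNorm y 2 μ ^ (1 - η / ν) *
        (⨆ j, eLpNorm (fun ξ => |ξ j| ^ ν * y ξ) 2 μ) ^ (η / ν) := by
  have hν : 0 < ν := by linarith
  set c := (Fintype.card ι : ℝ) ^ (η / θ)
  set w : EuclideanSpace ℝ ι → ℝ := fun ξ => √((∑ i, |ξ i| ^ (2 * ν)) / Fintype.card ι)
  have hw : Measurable w := by fun_prop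
  have symbol_le : ∀ ξ, ‖laplaceSymbol θ ξ.ofLp ^ (η / 2) * y ξ‖ ≤
      ‖c • (w ξ ^ (η / ν) * y ξ)‖ := by
    intro ξ
    rw [smul_eq_mul, ← mul_assoc, norm_mul, norm_mul]
    gcongr
    rw [Real.norm_of_nonneg (Real.rpow_nonneg (laplaceSymbol_nonneg _ _) _),
      Real.norm_of_nonneg (mul_nonneg (by positivity) (by positivity))]
    exact laplaceSymbol_rpow_le ξ.ofLp hη hθ hθν
  have norm_weight_mul : ∀ ξ, ‖w ξ * y ξ‖ =
      ‖√((∑ j, (|ξ j| ^ ν * y ξ) ^ 2) / Fintype.card ι)‖ := by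
    intro ξ
    have expand : (∑ j, (|ξ j| ^ ν * y ξ) ^ 2) / Fintype.card ι =
        (∑ i, |ξ i| ^ (2 * ν)) / Fintype.card ι * y ξ ^ 2 := by
      rw [div_mul_eq_mul_div, Finset.sum_mul]
      congr 1
      refine Finset.sum_congr rfl fun j _ => ?_
      rw [mul_pow, ← Real.rpow_natCast, ← Real.rpow_mul (abs_nonneg _), Nat.cast_ofNat,
        mul_comm ν]
    rw [expand, Real.sqrt_mul (by positivity), Real.sqrt_sq_eq_abs, norm_mul, norm_mul,
      Real.norm_eq_abs |y ξ|, abs_abs, Real.norm_eq_abs (y ξ)]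
  calc _ ≤ eLpNorm (fun ξ => c • (w ξ ^ (η / ν) * y ξ)) 2 μ := eLpNorm_mono symbol_le
    _ = ‖c‖ₑ * eLpNorm (fun ξ => w ξ ^ (η / ν) * y ξ) 2 μ := eLpNorm_const_smul c _ 2 μ
    _ ≤ ‖c‖ₑ * (eLpNorm y 2 μ ^ (1 - η / ν) * eLpNorm (fun ξ => w ξ * y ξ) 2 μ ^ (η / ν)) := by
      gcongr
      exact eLpNorm_rpow_mul_le two_ne_zero ofNat_ne_top (by positivity)
        ((div_le_one hν).2 hην) (fun ξ => Real.sqrt_nonneg _) hy (hw.aestronglyMeasurable.mul hy)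
    _ ≤ ‖c‖ₑ * (eLpNorm y 2 μ ^ (1 - η / ν) *
          (⨆ j, eLpNorm (fun ξ => |ξ j| ^ ν * y ξ) 2 μ) ^ (η / ν)) := by
      gcongr
      rw [eLpNorm_congr_norm_ae (Filter.Eventually.of_forall norm_weight_mul)]
      exact eLpNorm_sqrt_mean_sq_le_iSup hyν
    _ = _ := by rw [Real.enorm_of_nonneg (by positivity), mul_assoc]

theorem exists_not_eLpNorm_laplaceSymbol_rpow_mul_le {ι : Type*} [Fintype ι] [Nonempty ι]
    {ν η θ : ℝ} (hν : 0 < ν) (hη : 0 ≤ η) (hθ : 0 < θ) {C : ℝ}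
    (hC : C < (Fintype.card ι : ℝ) ^ (η / θ)) :
    ∃ y : EuclideanSpace ℝ ι → ℝ, MemLp y 2 volume ∧
      (∀ j, MemLp (fun ξ => |ξ j| ^ ν * y ξ) 2 volume) ∧
      ¬ eLpNorm (fun ξ => laplaceSymbol θ ξ.ofLp ^ (η / 2) * y ξ) 2 volume ≤
        ENNReal.ofReal C * eLpNorm y 2 volume ^ (1 - η / ν) *
          (⨆ j, eLpNorm (fun ξ => |ξ j| ^ ν * y ξ) 2 volume) ^ (η / ν) := by
  obtain ⟨ε, hε0, hε1, hCε⟩ := exists_mul_one_add_rpow_lt_mul_one_sub_rpow hC η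
  set s := Metric.closedBall (WithLp.toLp 2 fun _ : ι => (1 : ℝ)) ε
  set y : EuclideanSpace ℝ ι → ℝ := s.indicator fun _ => 1
  have coord : ∀ ξ ∈ s, ∀ j, |ξ j| ∈ Set.Icc (1 - ε) (1 + ε) :=
    fun ξ hξ => EuclideanSpace.abs_apply_mem_Icc_of_mem_closedBall_one hξ
  have hs : MeasurableSet s := Metric.isClosed_closedBall.measurableSet
  have hs_top : volume s ≠ ∞ := measure_closedBall_lt_top.ne
  have hy : MemLp y 2 volume := memLp_indicator_const 2 hs 1 (Or.inr hs_top)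
  have hy0 : eLpNorm y 2 volume ≠ 0 := by
    rw [show eLpNorm y 2 volume = _ from eLpNorm_indicator_const hs two_ne_zero ofNat_ne_top]
    exact mul_ne_zero (by simp) (rpow_pos (Metric.measure_closedBall_pos volume _ hε0) hs_top).ne'
  have lower : ENNReal.ofReal ((Fintype.card ι : ℝ) ^ (η / θ) * (1 - ε) ^ η) * eLpNorm y 2 volume ≤
      eLpNorm (fun ξ => laplaceSymbol θ ξ.ofLp ^ (η / 2) * y ξ) 2 volume := by
    rw [← Real.enorm_of_nonneg (by positivity)]
    refine enorm_mul_eLpNorm_indicator_one_le fun ξ hξ => ?_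
    rw [abs_of_nonneg (by positivity),
      abs_of_nonneg (Real.rpow_nonneg (laplaceSymbol_nonneg _ _) _)]
    exact card_rpow_mul_rpow_le_laplaceSymbol_rpow (by linarith) (fun i => (coord ξ hξ i).1) hη hθ
  have upper : ∀ j, eLpNorm (fun ξ => |ξ j| ^ ν * y ξ) 2 volume ≤
      ENNReal.ofReal ((1 + ε) ^ ν) * eLpNorm y 2 volume := by
    intro j
    rw [← Real.enorm_of_nonneg (by positivity)]
    refine eLpNorm_mul_indicator_one_le fun ξ hξ => ?_
    rw [abs_of_nonneg (Real.rpow_nonneg (abs_nonneg _) _),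
      abs_of_nonneg (Real.rpow_nonneg (by linarith) _)]
    exact Real.rpow_le_rpow (abs_nonneg _) (coord ξ hξ j).2 hν.le
  refine ⟨y, hy, fun j => ⟨?_, (upper j).trans_lt (mul_lt_top ofReal_lt_top hy.eLpNorm_lt_top)⟩,
    ENNReal.not_le_ofReal_mul_rpow_mul_iSup_rpow hy0 hy.eLpNorm_lt_top.ne (by positivity)
      (by positivity) (mul_pos (by positivity) (Real.rpow_pos_of_pos (by linarith) _)) lower upper
      ?_⟩
  · have : Measurable fun ξ : EuclideanSpace ℝ ι => |ξ j| ^ ν := by fun_prop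
    exact this.aestronglyMeasurable.mul hy.1
  · rwa [← Real.rpow_mul (by positivity), mul_div_cancel₀ _ hν.ne']

theorem sharp_generalized_laplacian_general {d : ℕ} (hd : 1 ≤ d)
    (ν η θ : ℝ) (hνη : η < ν) (hη : 0 < η) (hθ : 0 < θ) (hθν : θ ≤ 2 * ν) :
    (∀ y : EuclideanSpace ℝ (Fin d) → ℝ,
      MemLp y 2 volume →
      (∀ j : Fin d, MemLp (fun ξ => |ξ j| ^ ν * y ξ) 2 volume) →
      eLpNorm (fun ξ => ((∑ i, |ξ i| ^ θ) ^ (2 / θ)) ^ (η / 2) * y ξ) 2 volume ≤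
        ENNReal.ofReal ((d : ℝ) ^ (η / θ)) *
          eLpNorm y 2 volume ^ (1 - η / ν) *
          (⨆ j : Fin d, eLpNorm (fun ξ => |ξ j| ^ ν * y ξ) 2 volume) ^ (η / ν)) ∧
    (∀ C' : ℝ, C' < (d : ℝ) ^ (η / θ) →
      ∃ y : EuclideanSpace ℝ (Fin d) → ℝ,
        MemLp y 2 volume ∧
        (∀ j : Fin d, MemLp (fun ξ => |ξ j| ^ ν * y ξ) 2 volume) ∧
        ¬ eLpNorm (fun ξ => ((∑ i, |ξ i| ^ θ) ^ (2 / θ)) ^ (η / 2) * y ξ) 2 volume ≤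
          ENNReal.ofReal C' *
            eLpNorm y 2 volume ^ (1 - η / ν) *
            (⨆ j : Fin d, eLpNorm (fun ξ => |ξ j| ^ ν * y ξ) 2 volume) ^ (η / ν)) := by
  have : Nonempty (Fin d) := ⟨⟨0, hd⟩⟩
  refine ⟨fun y hy hyν => ?_, fun C hC => ?_⟩
  · have bound := eLpNorm_laplaceSymbol_rpow_mul_le hη.le hνη.le hθ hθν hy.1 fun j => (hyν j).1
    rwa [Fintype.card_fin] at bound
  · exact exists_not_eLpNorm_laplaceSymbol_rpow_mul_le (hη.trans hνη) hη.le hθ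
      (by rwa [Fintype.card_fin])

/-- **Sharp inequality for powers of the generalized Laplacian (Fourier side).**
For `ν ≥ 1`, `ν > η > 0`, `0 < θ ≤ 2ν` and `ψ_θ(ξ) = (∑ |ξᵢ|^θ)^{2/θ}`, the sharp
inequality `‖ψ_θ^{η/2}·y‖₂ ≤ d^{η/θ} ‖y‖₂^{1-η/ν} (maxⱼ ‖|ξⱼ|^ν·y‖₂)^{η/ν}` holds,
and `d^{η/θ}` cannot be replaced by a smaller constant. -/
theorem sharp_generalized_laplacian {d : ℕ} (hd : 1 ≤ d)
    (ν η θ : ℝ) (hν1 : 1 ≤ ν) (hνη : η < ν) (hη : 0 < η) (hθ : 0 < θ) (hθν : θ ≤ 2 * ν) :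
    (∀ y : EuclideanSpace ℝ (Fin d) → ℝ,
      MemLp y 2 volume →
      (∀ j : Fin d, MemLp (fun ξ => |ξ j| ^ ν * y ξ) 2 volume) →
      eLpNorm (fun ξ => ((∑ i, |ξ i| ^ θ) ^ (2 / θ)) ^ (η / 2) * y ξ) 2 volume ≤
        ENNReal.ofReal ((d : ℝ) ^ (η / θ)) *
          eLpNorm y 2 volume ^ (1 - η / ν) *
          (⨆ j : Fin d, eLpNorm (fun ξ => |ξ j| ^ ν * y ξ) 2 volume) ^ (η / ν)) ∧
    (∀ C' : ℝ, C' < (d : ℝ) ^ (η / θ) →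
      ∃ y : EuclideanSpace ℝ (Fin d) → ℝ,
        MemLp y 2 volume ∧
        (∀ j : Fin d, MemLp (fun ξ => |ξ j| ^ ν * y ξ) 2 volume) ∧
        ¬ eLpNorm (fun ξ => ((∑ i, |ξ i| ^ θ) ^ (2 / θ)) ^ (η / 2) * y ξ) 2 volume ≤
          ENNReal.ofReal C' *
            eLpNorm y 2 volume ^ (1 - η / ν) *
            (⨆ j : Fin d, eLpNorm (fun ξ => |ξ j| ^ ν * y ξ) 2 volume) ^ (η / ν)) :=
  sharp_generalized_laplacian_general hd ν η θ hνη hη hθ hθν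
end
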